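/- Suppose consistency holds (Y = A·Y¹ + (1−A)·Y⁰ almost surely), for a = 0,1 the treatment A and the potential outcome Yᵃ are conditionally independent given σ(L), positivity holds (δ ≤ π₀(L) ≤ 1−δ almost surely for some δ > 0), and Y⁰, Y¹ are integrable. Let V = v(L) for a measurable map v : 𝓛 → 𝒱. Then the conditional average causal effect is identified: E[Y¹ − Y⁰ ∣ σ(V)] = E[μ₀(L,1) − μ₀(L,0) ∣ σ(V)] almost surely. -/

import Mathlib

/-!
Conditional independence of `A` and `Yᵃ` given `σ(L)` makes `E[1{A=a}·Yᵃ | σ(L)]` factor as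
`P(A = a | σ(L)) · E[Yᵃ | σ(L)]`; by consistency the left side is `E[Y·1{A=a} | σ(L)]`, i.e. the
outcome regression times the propensity, and positivity lets us cancel the propensity. Hence
`E[Yᵃ | σ(L)] = μ₀(L, a)`, and the tower property for `σ(V) ≤ σ(L)` gives the claim.
-/

open MeasureTheory ProbabilityTheory Set

lemma comap_eq_generateFrom_preimage_Iic_rat {Ω : Type*} (f : Ω → ℝ) :
    MeasurableSpace.comap f inferInstance
      = MeasurableSpace.generateFrom ((f ⁻¹' ·) '' ⋃ q : ℚ, {Iic (q : ℝ)}) := by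
  rw [BorelSpace.measurable_eq (α := ℝ), Real.borel_eq_generateFrom_Iic_rat,
    MeasurableSpace.comap_generateFrom]

/-- The kernel-independence hypothesis quantifies "almost every `a`" separately for each pair of
sets; the countable π-system of rational half-lines lets us pull the quantifier outside. -/
theorem ProbabilityTheory.Kernel.IndepFun.ae_indepFun {α Ω : Type*} {mα : MeasurableSpace α}
    {mΩ : MeasurableSpace Ω} {κ : Kernel α Ω} [IsZeroOrMarkovKernel κ] {μ : Measure α}
    {f g : Ω → ℝ} (hf : Measurable f) (hg : Measurable g) (hfg : Kernel.IndepFun f g κ μ) :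
    ∀ᵐ a ∂μ, ProbabilityTheory.IndepFun f g (κ a) := by
  have hrat : ∀ᵐ a ∂μ, ∀ q r : ℚ, κ a (f ⁻¹' Iic (q : ℝ) ∩ g ⁻¹' Iic (r : ℝ))
      = κ a (f ⁻¹' Iic (q : ℝ)) * κ a (g ⁻¹' Iic (r : ℝ)) :=
    ae_all_iff.2 fun q ↦ ae_all_iff.2 fun r ↦
      Kernel.indepFun_iff_measure_inter_preimage_eq_mul.1 hfg _ _ measurableSet_Iic
        measurableSet_Iic
  filter_upwards [hrat] with a ha
  rw [IndepFun_iff_Indep]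
  refine ProbabilityTheory.IndepSets.indep hf.comap_le hg.comap_le
    (Real.isPiSystem_Iic_rat.comap f) (Real.isPiSystem_Iic_rat.comap g)
    (comap_eq_generateFrom_preimage_Iic_rat f)
    (comap_eq_generateFrom_preimage_Iic_rat g) ?_
  rw [ProbabilityTheory.IndepSets_iff]
  rintro _ _ ⟨_, hs, rfl⟩ ⟨_, ht, rfl⟩
  simp only [mem_iUnion, mem_singleton_iff] at hs ht
  obtain ⟨q, rfl⟩ := hs
  obtain ⟨r, rfl⟩ := ht
  exact ha q r

theorem ProbabilityTheory.CondIndepFun.condExp_mul_ae_eq {Ω : Type*} {m' mΩ : MeasurableSpace Ω}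
    [StandardBorelSpace Ω] {μ : Measure Ω} [IsFiniteMeasure μ] {hm' : m' ≤ mΩ}
    {f g : Ω → ℝ} (hf : Measurable f) (hg : Measurable g) (hfg : CondIndepFun m' hm' f g μ)
    (hf_int : Integrable f μ) (hg_int : Integrable g μ) (hfg_int : Integrable (f * g) μ) :
    μ[f * g | m'] =ᵐ[μ] μ[f | m'] * μ[g | m'] := by
  filter_upwards [condExp_ae_eq_integral_condExpKernel hm' hfg_int,
    condExp_ae_eq_integral_condExpKernel hm' hf_int,
    condExp_ae_eq_integral_condExpKernel hm' hg_int,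
    ae_of_ae_trim hm' (Kernel.IndepFun.ae_indepFun hf hg hfg)] with ω hfgω hfω hgω hind
  rw [hfgω, Pi.mul_apply, hfω, hgω]
  exact hind.integral_mul_eq_mul_integral hf.aestronglyMeasurable hg.aestronglyMeasurable

section Treatment

variable {Ω : Type*} {m' mΩ : MeasurableSpace Ω} {P : Measure Ω} [IsFiniteMeasure P] {A : Ω → ℝ}

lemma measurable_ite_eq_one_zero (hA : Measurable A) (a : ℝ) :
    Measurable fun ω ↦ if A ω = a then (1 : ℝ) else 0 :=
  Measurable.ite (hA (measurableSet_singleton a)) measurable_const measurable_const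

lemma norm_ite_eq_one_zero_le (a : ℝ) (ω : Ω) :
    ‖if A ω = a then (1 : ℝ) else 0‖ ≤ 1 := by
  split_ifs <;> norm_num

lemma integrable_ite_eq_one_zero (hA : Measurable A) (a : ℝ) :
    Integrable (fun ω ↦ if A ω = a then (1 : ℝ) else 0) P :=
  (integrable_const 1).mono' (measurable_ite_eq_one_zero hA a).aestronglyMeasurable
    (ae_of_all _ (norm_ite_eq_one_zero_le a))

lemma condExp_ite_eq_zero_ae_eq_one_sub (hm' : m' ≤ mΩ) (hA : Measurable A)
    (hA01 : ∀ ω, A ω = 0 ∨ A ω = 1) {p : Ω → ℝ}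
    (hps : P[(fun ω ↦ if A ω = 1 then (1 : ℝ) else 0) | m'] =ᵐ[P] p) :
    P[(fun ω ↦ if A ω = 0 then (1 : ℝ) else 0) | m'] =ᵐ[P] fun ω ↦ 1 - p ω := by
  have hcompl : (fun ω ↦ if A ω = 0 then (1 : ℝ) else 0)
      = (fun _ ↦ 1) - fun ω ↦ if A ω = 1 then (1 : ℝ) else 0 := by
    funext ω
    rcases hA01 ω with h | h <;> simp [h]
  rw [hcompl]
  refine (condExp_sub (integrable_const 1) (integrable_ite_eq_one_zero hA 1) m').trans ?_
  rw [condExp_const hm']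
  exact Filter.EventuallyEq.rfl.sub hps

variable [StandardBorelSpace Ω] {hm' : m' ≤ mΩ}

theorem condExp_ae_eq_of_condIndepFun_of_condExp_mul_ite {Y Ya p q : Ω → ℝ} {a : ℝ}
    (hA : Measurable A) (hYa : Measurable Ya) (hYa_int : Integrable Ya P)
    (hindep : CondIndepFun m' hm' A Ya P)
    (hcons : ∀ᵐ ω ∂P, A ω = a → Y ω = Ya ω)
    (hps : P[(fun ω ↦ if A ω = a then (1 : ℝ) else 0) | m'] =ᵐ[P] p)
    (hp : ∀ᵐ ω ∂P, p ω ≠ 0)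
    (hreg : P[(fun ω ↦ Y ω * if A ω = a then (1 : ℝ) else 0) | m'] =ᵐ[P] fun ω ↦ q ω * p ω) :
    P[Ya | m'] =ᵐ[P] q := by
  set ind : Ω → ℝ := fun ω ↦ if A ω = a then 1 else 0
  have hind : Measurable ind := measurable_ite_eq_one_zero hA a
  have hind_indep : CondIndepFun m' hm' ind Ya P :=
    hindep.comp (measurable_ite_eq_one_zero measurable_id a) measurable_id
  have hprod_int : Integrable (ind * Ya) P :=
    hYa_int.bdd_mul hind.aestronglyMeasurable (ae_of_all _ (norm_ite_eq_one_zero_le a))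
  have hcons' : (fun ω ↦ Y ω * ind ω) =ᵐ[P] ind * Ya := by
    filter_upwards [hcons] with ω h
    by_cases ha : A ω = a <;> simp [ind, ha, h]
  have hfactor : (fun ω ↦ q ω * p ω) =ᵐ[P] p * P[Ya | m'] :=
    hreg.symm.trans <| (condExp_congr_ae hcons').trans <|
      (hind_indep.condExp_mul_ae_eq hind hYa (integrable_ite_eq_one_zero hA a) hYa_int
        hprod_int).trans (hps.mul Filter.EventuallyEq.rfl)
  filter_upwards [hfactor, hp] with ω h hpω
  exact mul_left_cancel₀ hpω (by rw [mul_comm] at h; exact h.symm)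

end Treatment

theorem conditional_effect_identification_general
    {Ω 𝓛 𝒱 : Type*} [MeasurableSpace Ω] [StandardBorelSpace Ω]
    [MeasurableSpace 𝓛] [MeasurableSpace 𝒱]
    (P : Measure Ω) [IsProbabilityMeasure P]
    (L : Ω → 𝓛) (A Y Y0 Y1 : Ω → ℝ)
    (hL : Measurable L) (hA : Measurable A)
    (hY0 : Measurable Y0) (hY1 : Measurable Y1)
    (hA01 : ∀ ω, A ω = 0 ∨ A ω = 1)
    -- consistency: Y = A·Y¹ + (1−A)·Y⁰ a.s.
    (hcons : ∀ᵐ ω ∂P, Y ω = A ω * Y1 ω + (1 - A ω) * Y0 ω)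
    -- A and Yᵃ are conditionally independent given σ(L), for a = 0, 1
    (hindep0 : CondIndepFun (MeasurableSpace.comap L inferInstance) hL.comap_le A Y0 P)
    (hindep1 : CondIndepFun (MeasurableSpace.comap L inferInstance) hL.comap_le A Y1 P)
    -- π₀(L) is a version of P(A = 1 ∣ σ(L))
    (π₀ : 𝓛 → ℝ)
    (hps : P[(fun ω => if A ω = 1 then (1 : ℝ) else 0) |
        MeasurableSpace.comap L inferInstance] =ᵐ[P] fun ω => π₀ (L ω))
    -- positivity: δ ≤ π₀(L) ≤ 1 − δ a.s. for some δ > 0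
    (δ : ℝ) (hδ : 0 < δ) (hpos : ∀ᵐ ω ∂P, δ ≤ π₀ (L ω) ∧ π₀ (L ω) ≤ 1 - δ)
    -- integrability of the potential outcomes
    (hY0int : Integrable Y0 P) (hY1int : Integrable Y1 P)
    -- outcome regression: E[Y·1{A=a} ∣ σ(L)] = μ₀(L,a)·π₀ₐ(L) a.s. for a = 0, 1
    (μ₀ : 𝓛 → ℝ → ℝ)
    (hreg : ∀ a ∈ ({0, 1} : Set ℝ),
      P[(fun ω => Y ω * (if A ω = a then (1 : ℝ) else 0)) |
          MeasurableSpace.comap L inferInstance]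
        =ᵐ[P] fun ω => μ₀ (L ω) a * (a * π₀ (L ω) + (1 - a) * (1 - π₀ (L ω))))
    -- coarsening V = v(L)
    (v : 𝓛 → 𝒱) (hv : Measurable v) :
    P[(fun ω => Y1 ω - Y0 ω) | MeasurableSpace.comap (fun ω => v (L ω)) inferInstance]
      =ᵐ[P]
    P[(fun ω => μ₀ (L ω) 1 - μ₀ (L ω) 0) |
        MeasurableSpace.comap (fun ω => v (L ω)) inferInstance] := by
  have hVL : MeasurableSpace.comap (fun ω => v (L ω)) inferInstance
      ≤ MeasurableSpace.comap L inferInstance :=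
    (hv.comp (comap_measurable L)).comap_le
  have hπ : ∀ᵐ ω ∂P, π₀ (L ω) ≠ 0 ∧ 1 - π₀ (L ω) ≠ 0 := by
    filter_upwards [hpos] with ω h
    exact ⟨(by linarith : 0 < π₀ (L ω)).ne', (by linarith : 0 < 1 - π₀ (L ω)).ne'⟩
  have hE1 : P[Y1 | MeasurableSpace.comap L inferInstance] =ᵐ[P] fun ω => μ₀ (L ω) 1 :=
    condExp_ae_eq_of_condIndepFun_of_condExp_mul_ite hA hY1 hY1int hindep1
      (by filter_upwards [hcons] with ω h ha; simpa [ha] using h) hps (hπ.mono fun _ h => h.1)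
      ((hreg 1 (by simp)).trans (ae_of_all _ fun ω => by ring))
  have hE0 : P[Y0 | MeasurableSpace.comap L inferInstance] =ᵐ[P] fun ω => μ₀ (L ω) 0 :=
    condExp_ae_eq_of_condIndepFun_of_condExp_mul_ite hA hY0 hY0int hindep0
      (by filter_upwards [hcons] with ω h ha; simpa [ha] using h)
      (condExp_ite_eq_zero_ae_eq_one_sub hL.comap_le hA hA01 hps) (hπ.mono fun _ h => h.2)
      ((hreg 0 (by simp)).trans (ae_of_all _ fun ω => by ring))
  calc P[(fun ω => Y1 ω - Y0 ω) | MeasurableSpace.comap (fun ω => v (L ω)) inferInstance]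
      =ᵐ[P] P[P[Y1 - Y0 | MeasurableSpace.comap L inferInstance] |
          MeasurableSpace.comap (fun ω => v (L ω)) inferInstance] :=
        (condExp_condExp_of_le hVL hL.comap_le).symm
    _ =ᵐ[P] _ := condExp_congr_ae ((condExp_sub hY1int hY0int _).trans (hE1.sub hE0))

/-- Under consistency, conditional ignorability for `a = 0,1`, positivity
and integrability, the conditional average causal effect given a coarsening `V = v(L)` of the
covariates is identified:
`E[Y¹ − Y⁰ ∣ σ(V)] = E[μ₀(L,1) − μ₀(L,0) ∣ σ(V)]` almost surely. -/
theorem conditional_effect_identification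
    {Ω 𝓛 𝒱 : Type*} [MeasurableSpace Ω] [StandardBorelSpace Ω] [Nonempty Ω]
    [MeasurableSpace 𝓛] [MeasurableSpace 𝒱]
    (P : Measure Ω) [IsProbabilityMeasure P]
    (L : Ω → 𝓛) (A Y Y0 Y1 : Ω → ℝ)
    (hL : Measurable L) (hA : Measurable A) (hY : Measurable Y)
    (hY0 : Measurable Y0) (hY1 : Measurable Y1)
    (hA01 : ∀ ω, A ω = 0 ∨ A ω = 1)
    -- consistency: Y = A·Y¹ + (1−A)·Y⁰ a.s.
    (hcons : ∀ᵐ ω ∂P, Y ω = A ω * Y1 ω + (1 - A ω) * Y0 ω)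
    -- A and Yᵃ are conditionally independent given σ(L), for a = 0, 1
    (hindep0 : CondIndepFun (MeasurableSpace.comap L inferInstance) hL.comap_le A Y0 P)
    (hindep1 : CondIndepFun (MeasurableSpace.comap L inferInstance) hL.comap_le A Y1 P)
    -- π₀(L) is a version of P(A = 1 ∣ σ(L))
    (π₀ : 𝓛 → ℝ) (hπ₀ : Measurable π₀) (hπ₀01 : ∀ l, 0 ≤ π₀ l ∧ π₀ l ≤ 1)
    (hps : P[(fun ω => if A ω = 1 then (1 : ℝ) else 0) |
        MeasurableSpace.comap L inferInstance] =ᵐ[P] fun ω => π₀ (L ω))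
    -- positivity: δ ≤ π₀(L) ≤ 1 − δ a.s. for some δ > 0
    (δ : ℝ) (hδ : 0 < δ) (hpos : ∀ᵐ ω ∂P, δ ≤ π₀ (L ω) ∧ π₀ (L ω) ≤ 1 - δ)
    -- integrability of the potential outcomes
    (hY0int : Integrable Y0 P) (hY1int : Integrable Y1 P)
    -- outcome regression: E[Y·1{A=a} ∣ σ(L)] = μ₀(L,a)·π₀ₐ(L) a.s. for a = 0, 1
    (μ₀ : 𝓛 → ℝ → ℝ) (hμ₀ : Measurable fun p : 𝓛 × ℝ => μ₀ p.1 p.2)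
    (hreg : ∀ a ∈ ({0, 1} : Set ℝ),
      P[(fun ω => Y ω * (if A ω = a then (1 : ℝ) else 0)) |
          MeasurableSpace.comap L inferInstance]
        =ᵐ[P] fun ω => μ₀ (L ω) a * (a * π₀ (L ω) + (1 - a) * (1 - π₀ (L ω))))
    -- coarsening V = v(L)
    (v : 𝓛 → 𝒱) (hv : Measurable v) :
    P[(fun ω => Y1 ω - Y0 ω) | MeasurableSpace.comap (fun ω => v (L ω)) inferInstance]
      =ᵐ[P]
    P[(fun ω => μ₀ (L ω) 1 - μ₀ (L ω) 0) |
        MeasurableSpace.comap (fun ω => v (L ω)) inferInstance] :=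
  conditional_effect_identification_general P L A Y Y0 Y1 hL hA hY0 hY1 hA01 hcons hindep0 hindep1
    π₀ hps δ hδ hpos hY0int hY1int μ₀ hreg v hv
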